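/- arXiv:2205.15275 — 5 statements merged into one kernel-verified Lean document; each statement's English description precedes it below -/
import Mathlib

section
/- Let M be the sublattice of ℝ^op × ℝ given as the convex hull of two parallel lines l₀ and l₁ of slope −1 (with l₁ above l₀). Then the map T : M → M characterized by the incidence conditions (for u ∈ M with h the horizontal line through u, g₀ the vertical line through u, h₁ the horizontal line through T(u), g₁ the vertical line through T(u): the lines l₀, h, g₁ meet in a common point, and the lines l₁, g₀, h₁ meet in a common point) is a well-defined order-preserving automorphism of the poset M. -/
open CategoryTheory CategoryTheory.Limits Opposite

noncomputable section

/-- The strip `M ⊂ ℝᵒᵖ × ℝ` between the two lines of slope `-1` given by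
`x + y = a` and `x + y = b`. -/
def Strip (a b : ℝ) : Type := {p : ℝ × ℝ // a ≤ p.1 + p.2 ∧ p.1 + p.2 ≤ b}

namespace Strip

variable {a b : ℝ}

/-- The partial order inherited from `ℝᵒᵖ × ℝ`. -/
instance : PartialOrder (Strip a b) where
  le p q := q.1.1 ≤ p.1.1 ∧ p.1.2 ≤ q.1.2
  le_refl p := ⟨le_rfl, le_rfl⟩
  le_trans p q r h h' := ⟨le_trans h'.1 h.1, le_trans h.2 h'.2⟩
  le_antisymm p q h h' :=
    Subtype.ext (Prod.ext (le_antisymm h'.1 h.1) (le_antisymm h.2 h'.2))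

lemma le_def {p q : Strip a b} : p ≤ q ↔ q.1.1 ≤ p.1.1 ∧ p.1.2 ≤ q.1.2 := Iff.rfl

/-- The glide reflection `T`. -/
def glide (p : Strip a b) : Strip a b :=
  ⟨(a - p.1.2, b - p.1.1), by
    obtain ⟨h1, h2⟩ := p.2; constructor <;> dsimp <;> linarith⟩

/-- The glide reflection `T` as an order isomorphism of `M`. -/
def glideEquiv : Strip a b ≃o Strip a b where
  toFun := glide
  invFun p := ⟨(b - p.1.2, a - p.1.1), by
    obtain ⟨h1, h2⟩ := p.2; constructor <;> dsimp <;> linarith⟩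
  left_inv p := Subtype.ext (by simp [glide])
  right_inv p := Subtype.ext (by simp [glide])
  map_rel_iff' {p q} := by
    show (glide p ≤ glide q) ↔ _
    simp only [le_def, glide]
    constructor <;> rintro ⟨h1, h2⟩ <;> exact ⟨by linarith, by linarith⟩

lemma glideEquiv_coords (p : Strip a b) :
    (glideEquiv p).1 = (a - p.1.2, b - p.1.1) := rfl

lemma glideEquiv_symm_coords (p : Strip a b) :
    (glideEquiv.symm p).1 = (b - p.1.2, a - p.1.1) := rfl

/-- The boundary `∂M = l₀ ∪ l₁`. -/
def OnBoundary (p : Strip a b) : Prop := p.1.1 + p.1.2 = a ∨ p.1.1 + p.1.2 = b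

/-- The interior `int M`. -/
def InInterior (p : Strip a b) : Prop := a < p.1.1 + p.1.2 ∧ p.1.1 + p.1.2 < b

/-- `u` belongs to `(↓v) ∩ int(↑ T⁻¹ v)`, the support of the contravariant block `B_v`;
equivalently, `v ∈ (↑u) ∩ int(↓ T u)`. -/
def BlockCond (v u : Strip a b) : Prop :=
  u ≤ v ∧ u.1.1 < b - v.1.2 ∧ a - v.1.1 < u.1.2

lemma blockCond_convex {v u u' u'' : Strip a b} (h1 : u ≤ u') (h2 : u' ≤ u'')
    (hu : BlockCond v u) (hu'' : BlockCond v u'') : BlockCond v u' :=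
  ⟨le_trans h2 hu''.1, lt_of_le_of_lt h1.1 hu.2.1, lt_of_lt_of_le hu.2.2 h1.2⟩

lemma simpleCond_convex {w u u' u'' : Strip a b} (h1 : u ≤ u') (h2 : u' ≤ u'')
    (hu : u = w) (hu'' : u'' = w) : u' = w :=
  le_antisymm (hu'' ▸ h2) (hu ▸ h1)

variable (a b) in
/-- An axis-aligned rectangle in `M` with corners `u ≤ v ≤ w` and remaining corner on `l₁`. -/
def IsCohomRect (u v w : Strip a b) : Prop :=
  u ≤ v ∧ v ≤ w ∧
    ((v.1.1 = u.1.1 ∧ v.1.2 = w.1.2 ∧ w.1.1 + u.1.2 = b) ∨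
     (v.1.1 = w.1.1 ∧ v.1.2 = u.1.2 ∧ u.1.1 + w.1.2 = b))

lemma IsCohomRect.w_le_glide {u v w : Strip a b} (h : IsCohomRect a b u v w) :
    w ≤ glideEquiv u := by
  obtain ⟨h1, h2, h3⟩ := h
  have hu := u.2; have hv := v.2; have hw := w.2
  obtain ⟨hle1, hle2⟩ := h1; obtain ⟨hle3, hle4⟩ := h2
  rw [le_def]
  rcases h3 with ⟨e1, e2, e3⟩ | ⟨e1, e2, e3⟩ <;>
    exact ⟨by rw [glideEquiv_coords]; dsimp; linarith,
           by rw [glideEquiv_coords]; dsimp; linarith⟩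

lemma IsCohomRect.glideInv_le {u v w : Strip a b} (h : IsCohomRect a b u v w) :
    glideEquiv.symm w ≤ u := by
  have := h.w_le_glide
  have h2 := glideEquiv.symm.monotone this
  simpa using h2

end Strip

section Functors

open Strip

variable (a b : ℝ) (K : Type) [Field K]

attribute [local instance] Classical.propDecidable

/-- auxiliary linear map used for the internal maps of `condFunctor`. -/
def condMap (P : Strip a b → Prop) (u u' : Strip a b) :
    ((PLift (P u') → K) →ₗ[K] (PLift (P u) → K)) where
  toFun f _ := if h' : P u' then f ⟨h'⟩ else 0
  map_add' f g := by funext h; by_cases h' : P u' <;> simp [h']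
  map_smul' c f := by funext h; by_cases h' : P u' <;> simp [h']

@[simp] lemma condMap_apply (P : Strip a b → Prop) (u u' : Strip a b)
    (f : PLift (P u') → K) (h : PLift (P u)) :
    condMap a b K P u u' f h = if h' : P u' then f ⟨h'⟩ else 0 := rfl

/-- A functor `Mᵒᵖ ⥤ Vect_K` supported on the set of points satisfying `P`,
with internal maps the identity wherever possible.  Both the contravariant blocks `B_v`
and the simple functors `S_w` arise this way. -/
def condFunctor (P : Strip a b → Prop)
    (hconv : ∀ ⦃u u' u'' : Strip a b⦄, u ≤ u' → u' ≤ u'' → P u → P u'' → P u') :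
    (Strip a b)ᵒᵖ ⥤ ModuleCat K where
  obj u := ModuleCat.of K (PLift (P u.unop) → K)
  map {x y} f := ModuleCat.ofHom (condMap a b K P y.unop x.unop)
  map_id x := by
    refine ModuleCat.hom_ext (LinearMap.ext fun f => ?_)
    funext h
    show (if h' : P x.unop then f ⟨h'⟩ else 0) = f h
    rw [dif_pos h.down]
  map_comp {x y z} f g := by
    refine ModuleCat.hom_ext (LinearMap.ext fun v => ?_)
    funext h
    show (if h' : P x.unop then v ⟨h'⟩ else 0)
        = condMap a b K P z.unop y.unop (condMap a b K P y.unop x.unop v) h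
    by_cases hx : P x.unop
    · have hy : P y.unop := hconv (leOfHom g.unop) (leOfHom f.unop) h.down hx
      simp [hx, hy]
    · by_cases hy : P y.unop <;> simp [hx, hy]

/-- The contravariant block `B_v`. -/
def Block (v : Strip a b) : (Strip a b)ᵒᵖ ⥤ ModuleCat K :=
  condFunctor a b K (BlockCond v) (fun _ _ _ h1 h2 hu hu'' => blockCond_convex h1 h2 hu hu'')

/-- The simple functor `S_w`. -/
def SimpleF (w : Strip a b) : (Strip a b)ᵒᵖ ⥤ ModuleCat K :=
  condFunctor a b K (fun u => u = w) (fun _ _ _ h1 h2 hu hu'' => simpleCond_convex h1 h2 hu hu'')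

variable {a b K}

/-- The structure map `G(y) → G(x)` of a functor, for `x ≤ y` in `M`. -/
def seqMap (G : (Strip a b)ᵒᵖ ⥤ ModuleCat K) {x y : Strip a b} (h : x ≤ y) :
    G.obj (op y) ⟶ G.obj (op x) :=
  G.map (homOfLE h).op

variable (a b K)

/-- Pointwise finite-dimensionality. -/
def Pfd (G : (Strip a b)ᵒᵖ ⥤ ModuleCat K) : Prop :=
  ∀ u : Strip a b, FiniteDimensional K (G.obj (op u))

/-- Vanishing on the boundary `∂M`. -/
def VanishesOnBoundary (G : (Strip a b)ᵒᵖ ⥤ ModuleCat K) : Prop :=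
  ∀ u : Strip a b, OnBoundary u → ∀ x : G.obj (op u), x = 0

/-- Sequential continuity: for every increasing sequence `u_k` converging to `L`, the
natural map `G L → lim_k G (u k)` is an isomorphism; elementarily, every compatible
family lifts uniquely. -/
def SeqContinuousF (G : (Strip a b)ᵒᵖ ⥤ ModuleCat K) : Prop :=
  ∀ (u : ℕ → Strip a b) (hu : Monotone u) (L : Strip a b) (hle : ∀ k, u k ≤ L),
    Filter.Tendsto (fun k => (u k).1) Filter.atTop (nhds L.1) →
    ∀ x : ∀ k, G.obj (op (u k)),
      (∀ k, seqMap G (hu (Nat.le_succ k)) (x (k + 1)) = x k) →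
      ∃! y : G.obj (op L), ∀ k, seqMap G (hle k) y = x k

/-- Cohomologicality: the long sequences associated to axis-aligned rectangles with one
corner on `l₁` are exact. -/
def Cohomological (G : (Strip a b)ᵒᵖ ⥤ ModuleCat K) : Prop :=
  VanishesOnBoundary a b K G ∧
  ∀ (u v w : Strip a b) (h : IsCohomRect a b u v w) (n : ℤ),
    (Function.Exact
        (seqMap G (((glideEquiv ^ n : Strip a b ≃o Strip a b)).monotone h.w_le_glide))
        (seqMap G (((glideEquiv ^ n : Strip a b ≃o Strip a b)).monotone h.2.1))) ∧
    (Function.Exact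
        (seqMap G (((glideEquiv ^ n : Strip a b ≃o Strip a b)).monotone h.2.1))
        (seqMap G (((glideEquiv ^ n : Strip a b ≃o Strip a b)).monotone h.1))) ∧
    (Function.Exact
        (seqMap G (((glideEquiv ^ n : Strip a b ≃o Strip a b)).monotone h.1))
        (seqMap G (((glideEquiv ^ n : Strip a b ≃o Strip a b)).monotone h.glideInv_le)))

/-- Bounded above support: the support is contained in the downset `{y - x ≤ c}`. -/
def BddAboveSupport (G : (Strip a b)ᵒᵖ ⥤ ModuleCat K) : Prop :=
  ∃ c : ℝ, ∀ u : Strip a b, c < u.1.2 - u.1.1 → ∀ x : G.obj (op u), x = 0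

/-- Membership in the category `𝒥` of pfd, cohomological, sequentially continuous functors
with bounded above support. -/
def MemJ (G : (Strip a b)ᵒᵖ ⥤ ModuleCat K) : Prop :=
  Pfd a b K G ∧ Cohomological a b K G ∧ SeqContinuousF a b K G ∧ BddAboveSupport a b K G

/-- `𝒥`-presentability. -/
def JPresentable (G : (Strip a b)ᵒᵖ ⥤ ModuleCat K) : Prop :=
  ∃ (H P : (Strip a b)ᵒᵖ ⥤ ModuleCat K) (_ : MemJ a b K H) (_ : MemJ a b K P)
    (f : H ⟶ P) (g : P ⟶ G),
      (∀ u : (Strip a b)ᵒᵖ, Function.Exact (f.app u) (g.app u)) ∧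
      (∀ u : (Strip a b)ᵒᵖ, Function.Surjective (g.app u))

/-- The 0-th Betti function `β⁰(G) : int M → ℕ`, `u ↦ dim Nat(G, S_u)`. -/
def beta0 (G : (Strip a b)ᵒᵖ ⥤ ModuleCat K) (v : Strip a b) : ℕ :=
  if InInterior v then Module.finrank K (G ⟶ SimpleF a b K v) else 0

/-- Admissible Betti functions. -/
def AdmissibleBetti (β : Strip a b → ℕ) : Prop :=
  (∀ v, ¬ InInterior v → β v = 0) ∧
  (∃ c : ℝ, ∀ v : Strip a b, c < v.1.2 - v.1.1 → β v = 0) ∧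
  (∀ u : Strip a b, {v : Strip a b | BlockCond v u ∧ β v ≠ 0}.Finite)

/-- Admissible Euler functions. -/
def AdmissibleEuler (μ : Strip a b → ℤ) : Prop :=
  AdmissibleBetti a b (fun v => (μ v).natAbs)

end Functors

section More

open Strip DirectSum

variable (a b : ℝ) (K : Type) [Field K]

attribute [local instance] Classical.propDecidable

lemma condMap_comp (P : Strip a b → Prop)
    (hconv : ∀ ⦃u u' u'' : Strip a b⦄, u ≤ u' → u' ≤ u'' → P u → P u'' → P u')
    {u u' u'' : Strip a b} (h1 : u ≤ u') (h2 : u' ≤ u'') :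
    condMap a b K P u u'' =
      (condMap a b K P u u').comp (condMap a b K P u' u'') := by
  refine LinearMap.ext fun f => funext fun h => ?_
  by_cases hx : P u''
  · have hy : P u' := hconv h1 h2 h.down hx
    simp [hx, hy]
  · by_cases hy : P u' <;> simp [hx, hy]

/-- A direct sum of `condFunctor`s for an indexed family of supports. -/
def condSumFunctor (ι : Type) (P : ι → Strip a b → Prop)
    (hconv : ∀ i, ∀ ⦃u u' u'' : Strip a b⦄, u ≤ u' → u' ≤ u'' → P i u → P i u'' → P i u') :
    (Strip a b)ᵒᵖ ⥤ ModuleCat K where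
  obj u := ModuleCat.of K (⨁ i : ι, (PLift (P i u.unop) → K))
  map {x y} f := ModuleCat.ofHom
    (DFinsupp.mapRange.linearMap (fun i => condMap a b K (P i) y.unop x.unop))
  map_id x := by
    have e : (fun i => condMap a b K (P i) x.unop x.unop)
        = fun i : ι => (LinearMap.id : (PLift (P i x.unop) → K) →ₗ[K] _) := by
      funext i
      refine LinearMap.ext fun f => funext fun h => ?_
      show (if h' : P i x.unop then f ⟨h'⟩ else 0) = f h
      rw [dif_pos h.down]
    change ModuleCat.ofHom
      (DFinsupp.mapRange.linearMap fun i => condMap a b K (P i) x.unop x.unop) = _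
    rw [e, DFinsupp.mapRange.linearMap_id]
    rfl
  map_comp {x y z} f g := by
    have e : (fun i => condMap a b K (P i) z.unop x.unop)
        = fun i => (condMap a b K (P i) z.unop y.unop).comp
            (condMap a b K (P i) y.unop x.unop) := by
      funext i
      exact condMap_comp a b K (P i) (hconv i) (leOfHom g.unop) (leOfHom f.unop)
    change ModuleCat.ofHom
      (DFinsupp.mapRange.linearMap fun i => condMap a b K (P i) z.unop x.unop) = _
    rw [e, DFinsupp.mapRange.linearMap_comp]
    rfl

/-- The direct sum `⊕_{v} B_v^{m v}` of contravariant blocks with multiplicities `m`. -/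
def blockSum (m : Strip a b → ℕ) : (Strip a b)ᵒᵖ ⥤ ModuleCat K :=
  condSumFunctor a b K (Σ v : Strip a b, Fin (m v)) (fun s u => BlockCond s.1 u)
    (fun _ _ _ _ h1 h2 hu hu'' => blockCond_convex h1 h2 hu hu'')

/-- The pointwise direct sum of a sequence of functors. -/
def sumFunctor (Q : ℕ → (Strip a b)ᵒᵖ ⥤ ModuleCat K) :
    (Strip a b)ᵒᵖ ⥤ ModuleCat K where
  obj u := ModuleCat.of K (⨁ n : ℕ, (Q n).obj u)
  map {x y} f := ModuleCat.ofHom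
    (DFinsupp.mapRange.linearMap (fun n => (((Q n).map f).hom : (Q n).obj x →ₗ[K] (Q n).obj y)))
  map_id x := by
    have e : (fun n => (((Q n).map (𝟙 x)).hom : (Q n).obj x →ₗ[K] (Q n).obj x))
        = fun n : ℕ => LinearMap.id := by
      funext n; rw [CategoryTheory.Functor.map_id]; rfl
    change ModuleCat.ofHom (DFinsupp.mapRange.linearMap
      fun n => (((Q n).map (𝟙 x)).hom : (Q n).obj x →ₗ[K] (Q n).obj x)) = _
    rw [e, DFinsupp.mapRange.linearMap_id]
    rfl
  map_comp {x y z} f g := by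
    have e : (fun n => (((Q n).map (f ≫ g)).hom : (Q n).obj x →ₗ[K] (Q n).obj z))
        = fun n => ((((Q n).map g).hom : (Q n).obj y →ₗ[K] (Q n).obj z).comp
            (((Q n).map f).hom : (Q n).obj x →ₗ[K] (Q n).obj y)) := by
      funext n; rw [CategoryTheory.Functor.map_comp]; rfl
    change ModuleCat.ofHom (DFinsupp.mapRange.linearMap
      fun n => (((Q n).map (f ≫ g)).hom : (Q n).obj x →ₗ[K] (Q n).obj z)) = _
    rw [e, DFinsupp.mapRange.linearMap_comp]
    rfl

/-- Precomposition with the glide reflection `T`, as an endofunctor of `Mᵒᵖ`. -/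
def Tfun : (Strip a b)ᵒᵖ ⥤ (Strip a b)ᵒᵖ :=
  ((glideEquiv (a := a) (b := b)).monotone.functor).op

/-- A resolution of `G` by functors in `𝒥` (hence a projective resolution in `𝒞`). -/
def IsJResolution (G : (Strip a b)ᵒᵖ ⥤ ModuleCat K)
    (P : ℕ → (Strip a b)ᵒᵖ ⥤ ModuleCat K)
    (d : ∀ n, P (n + 1) ⟶ P n) (ε : P 0 ⟶ G) : Prop :=
  (∀ n, MemJ a b K (P n)) ∧
  (∀ u, Function.Surjective ((ε.app u))) ∧
  (∀ u, Function.Exact ((d 0).app u) (ε.app u)) ∧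
  (∀ n u, Function.Exact ((d (n + 1)).app u) ((d n).app u))

/-- Equivariance of a resolution: `P (n+3) = P n ∘ T` and `d (n+3) = - d n ∘ T`. -/
def IsEquivariantRes (P : ℕ → (Strip a b)ᵒᵖ ⥤ ModuleCat K)
    (d : ∀ n, P (n + 1) ⟶ P n) : Prop :=
  ∃ hEq : ∀ n, P (n + 3) = Tfun a b ⋙ P n,
    ∀ n, d (n + 3) =
      eqToHom (hEq (n + 1)) ≫ (-(Functor.whiskerLeft (Tfun a b) (d n))) ≫ eqToHom (hEq n).symm

/-- The cochain complex `Nat(P_•, S_v)` obtained by applying `Nat(-, S_v)` to a resolution. -/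
def dStar (P : ℕ → (Strip a b)ᵒᵖ ⥤ ModuleCat K) (d : ∀ n, P (n + 1) ⟶ P n)
    (v : Strip a b) (n : ℕ) :
    (P n ⟶ SimpleF a b K v) →ₗ[K] (P (n + 1) ⟶ SimpleF a b K v) :=
  Linear.leftComp K (SimpleF a b K v) (d n)

/-- `dim_K Extⁿ_𝒞(G, S_v)`, computed as the `n`-th cohomology of `Nat(P_•, S_v)` for a
projective resolution `P_•` of `G` in `𝒞`. -/
def extDim (P : ℕ → (Strip a b)ᵒᵖ ⥤ ModuleCat K) (d : ∀ n, P (n + 1) ⟶ P n)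
    (v : Strip a b) : ℕ → ℕ
  | 0 => Module.finrank K (LinearMap.ker (dStar a b K P d v 0))
  | (n + 1) =>
      Module.finrank K
        (↥(LinearMap.ker (dStar a b K P d v (n + 1))) ⧸
          Submodule.comap (LinearMap.ker (dStar a b K P d v (n + 1))).subtype
            (LinearMap.range (dStar a b K P d v n)))

/-- The partial alternating sum `Σ_{n < N} (-1)ⁿ dim Extⁿ(F, S_v)`. -/
def eulerAt (P : ℕ → (Strip a b)ᵒᵖ ⥤ ModuleCat K) (d : ∀ n, P (n + 1) ⟶ P n)
    (v : Strip a b) (N : ℕ) : ℤ :=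
  ∑ n ∈ Finset.range N, (-1 : ℤ) ^ n * (extDim a b K P d v n : ℤ)

/-- Objects of `𝒥`. -/
def JObj : Type 1 := {G : (Strip a b)ᵒᵖ ⥤ ModuleCat.{0} K // MemJ a b K G}

/-- Objects of `pres(𝒥)`. -/
def PresObj : Type 1 := {G : (Strip a b)ᵒᵖ ⥤ ModuleCat.{0} K // JPresentable a b K G}

/-- Relations defining `K₀` of `𝒥`: `[Q] = [P] + [R]` for every (automatically split)
short exact sequence `0 → P → Q → R → 0` in `𝒥`. -/
def K0JRelations : Set (FreeAbelianGroup (JObj a b K)) :=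
  {x | ∃ (P Q R : JObj a b K) (κ : P.1 ⟶ Q.1) (ρ : Q.1 ⟶ R.1),
    (∀ u, Function.Injective (κ.app u)) ∧ (∀ u, Function.Surjective (ρ.app u)) ∧
    (∀ u, Function.Exact (κ.app u) (ρ.app u)) ∧
    x = FreeAbelianGroup.of Q - FreeAbelianGroup.of P - FreeAbelianGroup.of R}

/-- The Grothendieck group `K₀(𝒥)`. -/
def K0J : Type 1 :=
  FreeAbelianGroup (JObj a b K) ⧸ AddSubgroup.closure (K0JRelations a b K)

instance : AddCommGroup (K0J a b K) := by unfold K0J; infer_instance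

/-- The class `[G] ∈ K₀(𝒥)`. -/
def K0Jmk (G : JObj a b K) : K0J a b K :=
  QuotientAddGroup.mk (FreeAbelianGroup.of G)

/-- Relations defining `K₀` of `pres(𝒥)`: `[Q] = [P] + [R]` for every short exact
sequence `0 → P → Q → R → 0` of `𝒥`-presentable functors. -/
def K0PresRelations : Set (FreeAbelianGroup (PresObj a b K)) :=
  {x | ∃ (P Q R : PresObj a b K) (κ : P.1 ⟶ Q.1) (ρ : Q.1 ⟶ R.1),
    (∀ u, Function.Injective (κ.app u)) ∧ (∀ u, Function.Surjective (ρ.app u)) ∧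
    (∀ u, Function.Exact (κ.app u) (ρ.app u)) ∧
    x = FreeAbelianGroup.of Q - FreeAbelianGroup.of P - FreeAbelianGroup.of R}

/-- The Grothendieck group `K₀(pres 𝒥)`. -/
def K0Pres : Type 1 :=
  FreeAbelianGroup (PresObj a b K) ⧸ AddSubgroup.closure (K0PresRelations a b K)

instance : AddCommGroup (K0Pres a b K) := by unfold K0Pres; infer_instance

/-- The class `[G] ∈ K₀(pres 𝒥)`. -/
def K0PresMk (G : PresObj a b K) : K0Pres a b K :=
  QuotientAddGroup.mk (FreeAbelianGroup.of G)

/-- The abelian group `G(𝔹)` of admissible Euler functions. -/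
def eulerGroup : AddSubgroup (Strip a b → ℤ) where
  carrier := {μ | AdmissibleEuler a b μ}
  zero_mem' := by
    refine ⟨fun v _ => rfl, ⟨0, fun v _ => rfl⟩, fun u => ?_⟩
    convert Set.finite_empty
    ext v; simp
  add_mem' := by
    rintro μ ν ⟨h1, ⟨c1, h2⟩, h3⟩ ⟨h1', ⟨c2, h2'⟩, h3'⟩
    refine ⟨fun v hv => ?_, ⟨max c1 c2, fun v hv => ?_⟩, fun u => ?_⟩
    · simp only [Pi.add_apply]
      rw [show μ v = 0 by simpa using h1 v hv, show ν v = 0 by simpa using h1' v hv]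
      rfl
    · simp only [Pi.add_apply]
      rw [show μ v = 0 by simpa using h2 v (lt_of_le_of_lt (le_max_left _ _) hv),
        show ν v = 0 by simpa using h2' v (lt_of_le_of_lt (le_max_right _ _) hv)]
      rfl
    · refine Set.Finite.subset ((h3 u).union (h3' u)) ?_
      rintro v ⟨hb, hne⟩
      by_cases hμ : μ v = 0
      · exact Or.inr ⟨hb, by simp only [Pi.add_apply, hμ, zero_add] at hne; simpa using hne⟩
      · exact Or.inl ⟨hb, by simpa using hμ⟩
  neg_mem' := by
    rintro μ ⟨h1, h2, h3⟩
    refine ⟨fun v hv => ?_, ?_, fun u => ?_⟩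
    · simp only [Pi.neg_apply, Int.natAbs_neg]; exact h1 v hv
    · obtain ⟨c, hc⟩ := h2
      exact ⟨c, fun v hv => by simp only [Pi.neg_apply, Int.natAbs_neg]; exact hc v hv⟩
    · refine Set.Finite.subset (h3 u) ?_
      rintro v ⟨hb, hne⟩
      exact ⟨hb, by simpa [Int.natAbs_neg] using hne⟩

/-- Subfunctors of a functor `G : Mᵒᵖ ⥤ Vect_K`. -/
def Subfunctor (G : (Strip a b)ᵒᵖ ⥤ ModuleCat K) : Type :=
  {S : ∀ u : Strip a b, Submodule K (G.obj (op u)) //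
    ∀ (u u' : Strip a b) (h : u' ≤ u), Submodule.map (seqMap G h).hom (S u) ≤ S u'}

end More

end

namespace Strip

variable {a b : ℝ}

lemma glideEquiv_incidence (u : Strip a b) :
    (glideEquiv u).1.1 + u.1.2 = a ∧ u.1.1 + (glideEquiv u).1.2 = b := by
  rw [glideEquiv_coords]
  constructor <;> ring

lemma eq_glideEquiv_of_incidence {u v : Strip a b} (h₀ : v.1.1 + u.1.2 = a)
    (h₁ : u.1.1 + v.1.2 = b) : v = glideEquiv u :=
  Subtype.ext <| by
    rw [glideEquiv_coords]
    ext <;> dsimp <;> linarith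

end Strip

-- The concurrence of `l₀, h, g₁` reads `(T u).1 + u.2 = a`, and that of `l₁, g₀, h₁` reads
-- `u.1 + (T u).2 = b`.
theorem glide_reflection_unique_order_automorphism_general (a b : ℝ) :
    ∃! T : Strip a b ≃o Strip a b,
      ∀ u : Strip a b, ((T u).1.1 + u.1.2 = a) ∧ (u.1.1 + (T u).1.2 = b) :=
  ⟨Strip.glideEquiv, Strip.glideEquiv_incidence, fun _ hT =>
    OrderIso.ext <| funext fun u => Strip.eq_glideEquiv_of_incidence (hT u).1 (hT u).2⟩

/-- the glide reflection `T`, characterized by the incidence conditions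
(the lines `l₀`, `h`, `g₁` meet in a common point, i.e. `(T u).1 + u.2 = a`, and the
lines `l₁`, `g₀`, `h₁` meet in a common point, i.e. `u.1 + (T u).2 = b`), is a
well-defined order-preserving automorphism of the poset `M`, and it is unique. -/
theorem glide_reflection_unique_order_automorphism (a b : ℝ) (hab : a < b) :
    ∃! T : Strip a b ≃o Strip a b,
      ∀ u : Strip a b, ((T u).1.1 + u.1.2 = a) ∧ (u.1.1 + (T u).1.2 = b) :=
  glide_reflection_unique_order_automorphism_general a b
end

section
/- For every point v in the interior of M, and every functor G : M^op → Vect_F vanishing on the boundary ∂M, evaluation at the element 1 ∈ F = B_v(v) yields a linear isomorphism Nat(B_v, G) ≅ G(v), where B_v is the contravariant block at v. -/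
/-!
A natural transformation `η : B_v ⟶ G` is determined by `η_v(1)`, because the structure maps
of `B_v` out of `v` send `1` to `1` on the support. Conversely, `x ∈ G(v)` defines
`η_u(f) = f · G(u ≤ v)(x)` on the support of `B_v` and `0` off it. This is natural because
`G(u ≤ v)` vanishes once `u` leaves the support: some `w` with `u ≤ w ≤ v` then lies on `∂M`,
where `G` is zero. The interior condition on `v` is what puts `v` itself in the support.
-/
open CategoryTheory CategoryTheory.Limits Opposite

noncomputable section

section Functors

open Strip

variable (a b : ℝ) (K : Type) [Field K]

attribute [local instance] Classical.propDecidable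

variable {a b K}

variable (a b K)

end Functors

section More

open Strip DirectSum

variable (a b : ℝ) (K : Type) [Field K]

attribute [local instance] Classical.propDecidable

end More

end

noncomputable section BlockYoneda

open Strip

attribute [local instance] Classical.propDecidable

variable {a b : ℝ} {K : Type} [Field K]

lemma seqMap_seqMap (G : (Strip a b)ᵒᵖ ⥤ ModuleCat K) {x y z : Strip a b}
    (hxy : x ≤ y) (hyz : y ≤ z) (t : G.obj (op z)) :
    seqMap G hxy (seqMap G hyz t) = seqMap G (hxy.trans hyz) t := by
  simp only [seqMap, ← ModuleCat.comp_apply, ← G.map_comp]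
  rfl

lemma seqMap_refl (G : (Strip a b)ᵒᵖ ⥤ ModuleCat K) (x : Strip a b) (t : G.obj (op x)) :
    seqMap G (le_refl x) t = t := by
  simp only [seqMap, homOfLE_refl, op_id, G.map_id, ModuleCat.id_apply]

lemma blockCond_self_of_inInterior {v : Strip a b} (hv : InInterior v) : BlockCond v v :=
  ⟨le_rfl, by linarith [hv.2], by linarith [hv.1]⟩

lemma exists_onBoundary_between_of_not_blockCond {u v : Strip a b} (huv : u ≤ v)
    (hu : ¬ BlockCond v u) : ∃ w : Strip a b, OnBoundary w ∧ u ≤ w ∧ w ≤ v := by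
  obtain ⟨hva, hvb⟩ := v.2
  by_cases h₁ : u.1.1 < b - v.1.2
  · have h₂ : u.1.2 ≤ a - v.1.1 := le_of_not_gt fun h₂ => hu ⟨huv, h₁, h₂⟩
    refine ⟨⟨(v.1.1, a - v.1.1), by constructor <;> dsimp <;> linarith⟩,
      Or.inl (by dsimp; ring), ⟨huv.1, h₂⟩, ⟨le_rfl, by dsimp; linarith⟩⟩
  · refine ⟨⟨(b - v.1.2, v.1.2), by constructor <;> dsimp <;> linarith⟩,
      Or.inr (by dsimp; ring), ⟨le_of_not_gt h₁, huv.2⟩, ⟨by dsimp; linarith, le_rfl⟩⟩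

lemma seqMap_eq_zero_of_not_blockCond {G : (Strip a b)ᵒᵖ ⥤ ModuleCat K}
    (hG : VanishesOnBoundary a b K G) {u v : Strip a b} (huv : u ≤ v)
    (hu : ¬ BlockCond v u) (x : G.obj (op v)) : seqMap G huv x = 0 := by
  obtain ⟨w, hw, huw, hwv⟩ := exists_onBoundary_between_of_not_blockCond huv hu
  rw [← seqMap_seqMap G huw hwv, hG w hw (seqMap G hwv x), map_zero]

namespace condFunctor

variable {P : Strip a b → Prop}
  {hconv : ∀ ⦃u u' u'' : Strip a b⦄, u ≤ u' → u' ≤ u'' → P u → P u'' → P u'}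
  {v : Strip a b} (hmax : ∀ u, P u → u ≤ v) {G : (Strip a b)ᵒᵖ ⥤ ModuleCat K}

def lift (hG : ∀ u (huv : u ≤ v), ¬ P u → ∀ x, seqMap G huv x = 0) (x : G.obj (op v)) :
    condFunctor a b K P hconv ⟶ G where
  app u := ModuleCat.ofHom
    { toFun := fun f => if h : P u.unop then f ⟨h⟩ • seqMap G (hmax _ h) x else 0
      map_add' := fun f g => by by_cases h : P u.unop <;> simp [h, add_smul]
      map_smul' := fun c f => by by_cases h : P u.unop <;> simp [h, mul_smul] }
  naturality {u u'} f := by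
    have hu'u : u'.unop ≤ u.unop := leOfHom f.unop
    ext g
    change (if h' : P u'.unop then (if h : P u.unop then g ⟨h⟩ else 0) • seqMap G (hmax _ h') x
        else 0) = seqMap G hu'u (if h : P u.unop then g ⟨h⟩ • seqMap G (hmax _ h) x else 0)
    by_cases hu : P u.unop
    · by_cases hu' : P u'.unop
      · simp only [dif_pos hu, dif_pos hu', map_smul, seqMap_seqMap]
      · simp only [dif_pos hu, dif_neg hu', map_smul, seqMap_seqMap, hG _ _ hu', smul_zero]
    · simp only [dif_neg hu, zero_smul, map_zero, dite_eq_ite, ite_self]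

def yoneda (hPv : P v) (hG : ∀ u (huv : u ≤ v), ¬ P u → ∀ x, seqMap G huv x = 0) :
    (condFunctor a b K P hconv ⟶ G) ≃ₗ[K] G.obj (op v) where
  toFun η := η.app (op v) (fun _ => 1)
  map_add' _ _ := rfl
  map_smul' _ _ := rfl
  invFun := lift hmax hG
  left_inv η := by
    ext u g
    change (if h : P u.unop then g ⟨h⟩ • seqMap G (hmax _ h) (η.app (op v) _) else 0) = _
    by_cases hu : P u.unop
    · have hg : g = g ⟨hu⟩ • (condFunctor a b K P hconv).map (homOfLE (hmax _ hu)).op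
          (fun _ => (1 : K)) := by
        funext h
        change g h = g ⟨hu⟩ * (if h' : P v then 1 else 0)
        rw [dif_pos hPv, mul_one]
      rw [dif_pos hu]
      conv_rhs => rw [hg, map_smul]
      exact congrArg _ (NatTrans.naturality_apply η (homOfLE (hmax _ hu)).op _).symm
    · have hg : g = 0 := funext fun h => (hu h.down).elim
      rw [dif_neg hu, hg, map_zero]
  right_inv x := by
    change (if h : P v then (1 : K) • seqMap G (hmax _ h) x else 0) = x
    rw [dif_pos hPv, one_smul, seqMap_refl]

end condFunctor

end BlockYoneda

/-- for `v` in the interior of `M` and `G : Mᵒᵖ ⥤ Vect_K` vanishing on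
`∂M`, evaluation at `1 ∈ K = B_v(v)` is a linear isomorphism `Nat(B_v, G) ≅ G(v)`. -/
theorem block_yoneda (a b : ℝ) (K : Type) [Field K] (v : Strip a b)
    (hv : Strip.InInterior v) (G : (Strip a b)ᵒᵖ ⥤ ModuleCat K)
    (hG : VanishesOnBoundary a b K G) :
    ∃ e : (Block a b K v ⟶ G) ≃ₗ[K] G.obj (op v),
      ∀ η : Block a b K v ⟶ G,
        e η = η.app (op v) ((fun _ => (1 : K)) : PLift (Strip.BlockCond v v) → K) :=
  ⟨condFunctor.yoneda (fun _ hu => hu.1) (blockCond_self_of_inInterior hv)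
      (fun _ huv hu => seqMap_eq_zero_of_not_blockCond hG huv hu), fun _ => rfl⟩
end

section
/- Let C be an abelian category and J a full replete additive subcategory of projective objects of C. Then the cokernel of any homomorphism between J-presentable objects is again J-presentable. In particular, a morphism of J-presentable objects is an epimorphism in pres(J) if and only if it is an epimorphism in C. -/
open CategoryTheory CategoryTheory.Limits

noncomputable section

universe v u

variable {C : Type u} [Category.{v} C]

/-- An object `X` is `J`-presentable if there is an exact sequence `Q → P → X → 0`
with `P`, `Q` in `J`. -/
def JPres [Abelian C] (J : C → Prop) (X : C) : Prop :=
  ∃ (P Q : C) (_ : J P) (_ : J Q) (f : Q ⟶ P) (g : P ⟶ X) (w : f ≫ g = 0),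
    Epi g ∧ (ShortComplex.mk f g w).Exact

/-! Given presentations `Q → P → X → 0` and `Q' → P' → Y → 0`, projectivity of `P` lifts
`f : X → Y` to `h : P → P'`, and `P ⊞ Q' → P' → coker f → 0` is then a presentation of
`coker f`. So `pres(J)` is closed under cokernels in `C`, and an epimorphism `f` of `pres(J)`
cancels from `f ≫ cokernel.π f = f ≫ 0`, forcing `cokernel.π f = 0`. -/

section CokernelPresentation

variable [Abelian C] {P Q' P' X Y : C} {gX : P ⟶ X} {f : X ⟶ Y} {fY : Q' ⟶ P'} {gY : P' ⟶ Y}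
  {h : P ⟶ P'}

lemma biprod_desc_comp_cokernel_π (wY : fY ≫ gY = 0) (hh : h ≫ gY = gX ≫ f) :
    biprod.desc h fY ≫ gY ≫ cokernel.π f = 0 := by
  ext
  · simp [reassoc_of% hh]
  · simp [reassoc_of% wY]

lemma exact_biprod_desc_cokernel_π [Epi gX] {wY : fY ≫ gY = 0}
    (hY : (ShortComplex.mk fY gY wY).Exact) (hh : h ≫ gY = gX ≫ f) :
    (ShortComplex.mk _ _ (biprod_desc_comp_cokernel_π (gX := gX) wY hh)).Exact := by
  rw [ShortComplex.exact_iff_exact_up_to_refinements]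
  intro A y hy
  dsimp at y hy ⊢
  have hcoker : (ShortComplex.mk f (cokernel.π f) (cokernel.condition f)).Exact :=
    ShortComplex.exact_of_g_is_cokernel _ (cokernelIsCokernel f)
  obtain ⟨A₁, π₁, hπ₁, x, hx⟩ := hcoker.exact_up_to_refinements (y ≫ gY) (by simpa using hy)
  obtain ⟨A₂, π₂, hπ₂, p, hp⟩ := surjective_up_to_refinements_of_epi gX x
  dsimp at hx hp
  have hdiff : (π₂ ≫ π₁ ≫ y - p ≫ h) ≫ gY = 0 := by
    rw [Preadditive.sub_comp, sub_eq_zero, Category.assoc, Category.assoc, hx, Category.assoc,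
      hh, reassoc_of% hp]
  obtain ⟨A₃, π₃, hπ₃, q, hq⟩ := hY.exact_up_to_refinements _ hdiff
  dsimp at hq
  refine ⟨A₃, π₃ ≫ π₂ ≫ π₁, epi_comp _ _, biprod.lift (π₃ ≫ p) q, ?_⟩
  rw [Preadditive.comp_sub, sub_eq_iff_eq_add] at hq
  simp only [Category.assoc, biprod.lift_desc]
  rw [hq, add_comm]

end CokernelPresentation

lemma JPres.cokernel [Abelian C] {J : C → Prop} (hsum : ∀ {X Y : C}, J X → J Y → J (X ⊞ Y))
    (hproj : ∀ X : C, J X → Projective X) {X Y : C} (hX : JPres J X) (hY : JPres J Y)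
    (f : X ⟶ Y) : JPres J (cokernel f) := by
  obtain ⟨P, Q, hP, -, -, gX, -, hgX, -⟩ := hX
  obtain ⟨P', Q', hP', hQ', fY, gY, wY, hgY, hexY⟩ := hY
  have := hproj P hP
  obtain ⟨h, hh⟩ : ∃ h : P ⟶ P', h ≫ gY = gX ≫ f :=
    ⟨Projective.factorThru (gX ≫ f) gY, Projective.factorThru_comp _ _⟩
  exact ⟨P', P ⊞ Q', hP', hsum hP hQ', _, _, _, epi_comp _ _,
    exact_biprod_desc_cokernel_π hexY hh⟩

lemma ObjectProperty.epi_iff_epi_ι_map_of_cokernel [Abelian C] {S : ObjectProperty C}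
    (hS : ∀ {X Y : S.FullSubcategory} (f : X ⟶ Y), S (cokernel (S.ι.map f)))
    {X Y : S.FullSubcategory} (f : X ⟶ Y) : Epi f ↔ Epi (S.ι.map f) := by
  refine ⟨fun hf => ?_, fun hf => S.ι.epi_of_epi_map hf⟩
  apply Abelian.epi_of_cokernel_π_eq_zero
  let π : Y ⟶ ⟨_, hS f⟩ := ObjectProperty.homMk (cokernel.π (S.ι.map f))
  have hπ : f ≫ π = f ≫ 0 := by
    ext
    exact (cokernel.condition _).trans comp_zero.symm
  exact congrArg (·.hom) (hf.left_cancellation π 0 hπ)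

theorem cokernel_JPresentable_and_epi_iff_general [Abelian C] (J : C → Prop)
    (hsum : ∀ {X Y : C}, J X → J Y → J (X ⊞ Y))
    (hproj : ∀ X : C, J X → Projective X) :
    (∀ (X Y : C), JPres J X → JPres J Y → ∀ f : X ⟶ Y, JPres J (cokernel f)) ∧
    (∀ (X Y : ObjectProperty.FullSubcategory (JPres J)) (f : X ⟶ Y),
      Epi f ↔ Epi ((ObjectProperty.ι (JPres J)).map f)) :=
  ⟨fun _ _ hX hY f => JPres.cokernel hsum hproj hX hY f,
    fun _ _ f => ObjectProperty.epi_iff_epi_ι_map_of_cokernel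
      (fun {X Y} _ => JPres.cokernel hsum hproj X.property Y.property _) f⟩

/-- for a full replete additive subcategory `J` of projectives in an abelian
category `C`, the cokernel of any morphism of `J`-presentable objects is `J`-presentable;
in particular, a morphism of `J`-presentable objects is an epimorphism in `pres(J)` iff it
is an epimorphism in `C`. -/
theorem cokernel_JPresentable_and_epi_iff [Abelian C] (J : C → Prop)
    (hrepl : ∀ {X Y : C}, J X → (X ≅ Y) → J Y)
    (hsum : ∀ {X Y : C}, J X → J Y → J (X ⊞ Y))
    (hproj : ∀ X : C, J X → Projective X) :
    (∀ (X Y : C), JPres J X → JPres J Y → ∀ f : X ⟶ Y, JPres J (cokernel f)) ∧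
    (∀ (X Y : ObjectProperty.FullSubcategory (JPres J)) (f : X ⟶ Y),
      Epi f ↔ Epi ((ObjectProperty.ι (JPres J)).map f)) :=
  cokernel_JPresentable_and_epi_iff_general J hsum hproj

end
end

section
/- Let C be an abelian category and J a full replete additive subcategory of projectives in C. Suppose that for every homomorphism ψ : Q → P with Q, P in J there is an exact sequence R → Q → P with R in J. Then the full subcategory pres(J) of J-presentable objects is an abelian subcategory of C (closed under kernels and cokernels, with such kernels and cokernels computed as in C). -/
/-!
Lift `f : X ⟶ Y` to `φ : P₁ ⟶ P₂` between the projective objects of two presentations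
`Q₁ → P₁ → X` and `Q₂ → P₂ → Y`. Then `[φ, f₂] : P₁ ⊞ Q₂ ⟶ P₂` presents `coker f`.
The elements of `P₁` mapping into `ker f` are those whose image under `φ` lies in
`ker g₂ = im f₂`, i.e. the first components of `ker [φ, f₂]`; covering this kernel by
`R ∈ J` gives an epimorphism `R ⟶ ker f`, and covering `ker [R → P₁, f₁]` by `S ∈ J`
in the same way yields its relations.
-/

open CategoryTheory CategoryTheory.Limits

noncomputable section

universe v u

variable {C : Type u} [Category.{v} C]

section Abelian

variable [Abelian C]

lemma biprod_fst_comp_comp_eq_zero {Z P Q X R : C} {f : Q ⟶ P} {g : P ⟶ X} (w : f ≫ g = 0)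
    (h : Z ⟶ P) {σ : R ⟶ Z ⊞ Q} (wσ : σ ≫ biprod.desc h f = 0) :
    (σ ≫ biprod.fst) ≫ h ≫ g = 0 := by
  have : σ ≫ biprod.desc h f ≫ g = 0 := by rw [← Category.assoc, wσ, zero_comp]
  simpa [biprod.desc_eq, w] using this

lemma exact_biprod_fst_comp {Z P Q X R : C} {f : Q ⟶ P} {g : P ⟶ X} {w : f ≫ g = 0}
    (hfg : (ShortComplex.mk f g w).Exact) (h : Z ⟶ P) {σ : R ⟶ Z ⊞ Q}
    {wσ : σ ≫ biprod.desc h f = 0} (hσ : (ShortComplex.mk σ _ wσ).Exact) :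
    (ShortComplex.mk (σ ≫ biprod.fst) (h ≫ g) (biprod_fst_comp_comp_eq_zero w h wσ)).Exact := by
  rw [ShortComplex.exact_iff_exact_up_to_refinements]
  intro A x hx
  obtain ⟨A₁, π₁, _, q, hq⟩ := hfg.exact_up_to_refinements (x ≫ h) (by simpa using hx)
  have hker : biprod.lift (π₁ ≫ x) (-q) ≫ biprod.desc h f = 0 := by
    simp [hq]
  obtain ⟨A₂, π₂, _, s, hs⟩ := hσ.exact_up_to_refinements _ hker
  refine ⟨A₂, π₂ ≫ π₁, epi_comp _ _, s, ?_⟩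
  simpa using congrArg (· ≫ biprod.fst) hs

lemma exact_comp_of_exact_comp_epi {R P X Y : C} {a : R ⟶ P} {g : P ⟶ X} {f : X ⟶ Y}
    [Epi g] {w : a ≫ g ≫ f = 0} (hS : (ShortComplex.mk a (g ≫ f) w).Exact) :
    (ShortComplex.mk (a ≫ g) f (by simpa using w)).Exact := by
  rw [ShortComplex.exact_iff_exact_up_to_refinements]
  intro A x hx
  obtain ⟨A₁, π₁, _, p, hp⟩ := surjective_up_to_refinements_of_epi g x
  obtain ⟨A₂, π₂, _, r, hr⟩ := hS.exact_up_to_refinements p (by simp [← reassoc_of% hp, hx])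
  refine ⟨A₂, π₂ ≫ π₁, epi_comp _ _, r, ?_⟩
  simp [hp, ← reassoc_of% hr]

lemma exact_kernel_lift_of_exact {R K X Y : C} {a : R ⟶ K} {b : K ⟶ X} {w : a ≫ b = 0}
    (hS : (ShortComplex.mk a b w).Exact) (f : X ⟶ Y) (hb : b ≫ f = 0) :
    (ShortComplex.mk a (kernel.lift f b hb)
      (by simp [← cancel_mono (kernel.ι f), w])).Exact :=
  (ShortComplex.exact_iff_of_epi_of_isIso_of_mono
    { τ₁ := 𝟙 R, τ₂ := 𝟙 K, τ₃ := kernel.ι f }).2 hS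

lemma exact_biprod_desc_comp_cokernel_π {X Y P₁ P₂ Q₂ : C} {f : X ⟶ Y} {g₁ : P₁ ⟶ X}
    [Epi g₁] {f₂ : Q₂ ⟶ P₂} {g₂ : P₂ ⟶ Y} {w₂ : f₂ ≫ g₂ = 0}
    (hex₂ : (ShortComplex.mk f₂ g₂ w₂).Exact) {φ : P₁ ⟶ P₂} (hφ : φ ≫ g₂ = g₁ ≫ f) :
    (ShortComplex.mk (biprod.desc φ f₂) (g₂ ≫ cokernel.π f)
      (by ext <;> simp [reassoc_of% hφ, reassoc_of% w₂])).Exact := by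
  rw [ShortComplex.exact_iff_exact_up_to_refinements]
  intro A (x : A ⟶ P₂) (hx : x ≫ g₂ ≫ cokernel.π f = 0)
  have hcok : (ShortComplex.mk f (cokernel.π f) (cokernel.condition f)).Exact :=
    ShortComplex.exact_of_g_is_cokernel _ (cokernelIsCokernel f)
  obtain ⟨A₁, π₁, _, y, hy⟩ := hcok.exact_up_to_refinements (x ≫ g₂) (by simpa using hx)
  obtain ⟨A₂, π₂, _, p, hp⟩ := surjective_up_to_refinements_of_epi g₁ y
  have hker : (π₂ ≫ π₁ ≫ x - p ≫ φ) ≫ g₂ = 0 := by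
    dsimp at hy
    simp only [Preadditive.sub_comp, Category.assoc, hφ]
    rw [hy, reassoc_of% hp, sub_self]
  obtain ⟨A₃, π₃, _, q, hq⟩ := hex₂.exact_up_to_refinements _ hker
  refine ⟨A₃, π₃ ≫ π₂ ≫ π₁, epi_comp _ _, biprod.lift (π₃ ≫ p) q, ?_⟩
  dsimp at hq ⊢
  rw [biprod.lift_desc, ← hq]
  simp

lemma exists_exact_comp_of_exact {J : C → Prop}
    (hsum : ∀ {X Y : C}, J X → J Y → J (X ⊞ Y))
    (hker : ∀ (Q P : C), J Q → J P → ∀ ψ : Q ⟶ P,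
      ∃ (R : C) (_ : J R) (φ : R ⟶ Q) (w : φ ≫ ψ = 0), (ShortComplex.mk φ ψ w).Exact)
    {Z P Q X : C} (hZ : J Z) (hP : J P) (hQ : J Q) {f : Q ⟶ P} {g : P ⟶ X} {w : f ≫ g = 0}
    (hfg : (ShortComplex.mk f g w).Exact) (h : Z ⟶ P) :
    ∃ (S : C) (_ : J S) (s : S ⟶ Z) (ws : s ≫ h ≫ g = 0),
      (ShortComplex.mk s (h ≫ g) ws).Exact := by
  obtain ⟨S, hS, σ, wσ, hσ⟩ := hker _ _ (hsum hZ hQ) hP (biprod.desc h f)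
  exact ⟨S, hS, σ ≫ biprod.fst, _, exact_biprod_fst_comp hfg h hσ⟩

end Abelian

theorem JPresentable_abelian_subcategory_general [Abelian C] (J : C → Prop)
    (hsum : ∀ {X Y : C}, J X → J Y → J (X ⊞ Y))
    (hproj : ∀ X : C, J X → Projective X)
    (hker : ∀ (Q P : C), J Q → J P → ∀ ψ : Q ⟶ P,
      ∃ (R : C) (_ : J R) (φ : R ⟶ Q) (w : φ ≫ ψ = 0), (ShortComplex.mk φ ψ w).Exact) :
    ∀ (X Y : C), JPres J X → JPres J Y → ∀ f : X ⟶ Y,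
      JPres J (kernel f) ∧ JPres J (cokernel f) := by
  rintro X Y ⟨P₁, Q₁, hP₁, hQ₁, f₁, g₁, _, hg₁, hex₁⟩ ⟨P₂, Q₂, hP₂, hQ₂, f₂, g₂, _, _, hex₂⟩ f
  have := hproj P₁ hP₁
  obtain ⟨φ, hφ⟩ : ∃ φ : P₁ ⟶ P₂, φ ≫ g₂ = g₁ ≫ f := ⟨_, Projective.factorThru_comp _ _⟩
  refine ⟨?_, P₂, P₁ ⊞ Q₂, hP₂, hsum hP₁ hQ₂, _, _, _, epi_comp _ _,
    exact_biprod_desc_comp_cokernel_π hex₂ hφ⟩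
  obtain ⟨R, hR, ρ, _, hρ⟩ := exists_exact_comp_of_exact hsum hker hP₁ hP₂ hQ₂ hex₂ φ
  simp only [hφ] at hρ
  have hρf := exact_comp_of_exact_comp_epi hρ
  obtain ⟨S, hS, σ, _, hσ⟩ := exists_exact_comp_of_exact hsum hker hR hP₁ hQ₁ hex₁ ρ
  exact ⟨R, S, hR, hS, σ, _, _, hρf.epi_kernelLift, exact_kernel_lift_of_exact hσ f _⟩

/-- if for every morphism `ψ : Q → P` with `Q, P` in `J` there is an exact
sequence `R → Q → P` with `R` in `J`, then the `J`-presentable objects form an abelian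
subcategory of `C`: they are closed under the kernels and cokernels computed in `C`. -/
theorem JPresentable_abelian_subcategory [Abelian C] (J : C → Prop)
    (hrepl : ∀ {X Y : C}, J X → (X ≅ Y) → J Y)
    (hsum : ∀ {X Y : C}, J X → J Y → J (X ⊞ Y))
    (hproj : ∀ X : C, J X → Projective X)
    (hker : ∀ (Q P : C), J Q → J P → ∀ ψ : Q ⟶ P,
      ∃ (R : C) (_ : J R) (φ : R ⟶ Q) (w : φ ≫ ψ = 0), (ShortComplex.mk φ ψ w).Exact) :
    ∀ (X Y : C), JPres J X → JPres J Y → ∀ f : X ⟶ Y,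
      JPres J (kernel f) ∧ JPres J (cokernel f) :=
  JPresentable_abelian_subcategory_general J hsum hproj hker
end
end

section
/- Let C be an abelian category and J a full replete additive subcategory of projectives such that every J-presentable object X admits a projective cover P → X with P in J. Then J is exactly the subcategory of projective objects of the abelian category pres(J): an object of pres(J) is projective in pres(J) if and only if it lies in J. -/
open CategoryTheory CategoryTheory.Limits

noncomputable section

universe v u

variable {C : Type u} [Category.{v} C]

/-!
The inclusion `pres(J) ⥤ C` preserves epimorphisms, because `pres(J)` is closed under
cokernels: if `Q → P → B → 0` presents `B` and `R → E` is an epimorphism with `R ∈ J`,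
lifting `R → E → B` along `P → B` yields a presentation `R ⊞ Q → P → coker e → 0`.
Hence objects of `J` stay projective in `pres(J)`. Conversely, a projective `X` of `pres(J)`
splits its projective cover `P → X`, and essentiality forces the splitting `X → P` to be
an isomorphism.
-/

lemma isIso_of_comp_eq_id_of_essential [Balanced C] {P X : C} {π : P ⟶ X}
    (hess : ∀ (Z : C) (g : Z ⟶ P), Epi (g ≫ π) → Epi g) {s : X ⟶ P} (hs : s ≫ π = 𝟙 X) :
    IsIso s :=
  have : Mono s := mono_of_mono_fac hs
  have : Epi s := hess _ s (hs ▸ inferInstance)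
  isIso_of_mono_of_epi s

section Abelian

variable [Abelian C]

lemma exact_biprod_desc_comp_cokernel_π_s8 {Q P B E R : C} {f : Q ⟶ P} {g : P ⟶ B}
    (w : f ≫ g = 0) (hfg : (ShortComplex.mk f g w).Exact) (e : E ⟶ B) {v : R ⟶ E} [Epi v]
    {u : R ⟶ P} (hu : u ≫ g = v ≫ e) :
    (ShortComplex.mk (biprod.desc u f) (g ≫ cokernel.π e)
      (by ext <;> simp [reassoc_of% hu, reassoc_of% w])).Exact := by
  rw [ShortComplex.exact_iff_exact_up_to_refinements]
  intro A x hx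
  obtain ⟨A₁, π₁, _, y, hy⟩ :=
    (CokernelCofork.IsColimit.comp_π_eq_zero_iff_up_to_refinements (cokernelIsCokernel e)
      (x ≫ g)).1 (by simpa using hx)
  obtain ⟨A₂, π₂, _, z, hz⟩ := surjective_up_to_refinements_of_epi v y
  have hker : (π₂ ≫ π₁ ≫ x - z ≫ u) ≫ g = 0 := by
    rw [Preadditive.sub_comp, Category.assoc, Category.assoc, hy, Category.assoc, hu,
      reassoc_of% hz, sub_self]
  obtain ⟨A₃, π₃, _, q, hq⟩ := hfg.exact_up_to_refinements _ hker
  refine ⟨A₃, π₃ ≫ π₂ ≫ π₁, inferInstance, biprod.lift (π₃ ≫ z) q, ?_⟩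
  simp only [Preadditive.comp_sub] at hq
  simp [← hq]

lemma jPres_of_mem (J : C → Prop) {P : C} (hP : J P) : JPres J P :=
  ⟨P, P, hP, hP, 0, 𝟙 P, by simp, inferInstance,
    (ShortComplex.exact_iff_mono _ rfl).2 (by dsimp; infer_instance)⟩

lemma jPres_cokernel (J : C → Prop) (hsum : ∀ {X Y : C}, J X → J Y → J (X ⊞ Y))
    (hproj : ∀ X : C, J X → Projective X) {E B : C} (hE : JPres J E) (hB : JPres J B)
    (e : E ⟶ B) : JPres J (cokernel e) := by
  obtain ⟨P, Q, hP, hQ, f, g, w, _, hfg⟩ := hB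
  obtain ⟨R, -, hR, -, -, v, -, _, -⟩ := hE
  have := hproj R hR
  exact ⟨P, R ⊞ Q, hP, hsum hR hQ, _, g ≫ cokernel.π e, _, inferInstance,
    exact_biprod_desc_comp_cokernel_π_s8 w hfg e (v := v) (Projective.factorThru_comp _ _)⟩

lemma preservesEpimorphisms_ι_jPres (J : C → Prop)
    (hsum : ∀ {X Y : C}, J X → J Y → J (X ⊞ Y)) (hproj : ∀ X : C, J X → Projective X) :
    (ObjectProperty.ι (JPres J)).PreservesEpimorphisms where
  preserves {A B} e _ := by
    refine Abelian.epi_of_cokernel_π_eq_zero _ (congrArg InducedCategory.Hom.hom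
      ((cancel_epi e).1 (?_ : e ≫ ObjectProperty.homMk (cokernel.π e.hom) =
        e ≫ (ObjectProperty.homMk 0 : B ⟶ ⟨_, jPres_cokernel J hsum hproj A.2 B.2 e.hom⟩))))
    ext
    simp

end Abelian

/-- if every `J`-presentable object admits a projective cover by an object
of `J`, then `J` is exactly the subcategory of projective objects of `pres(J)`. -/
theorem J_eq_projectives_of_presJ [Abelian C] (J : C → Prop)
    (hrepl : ∀ {X Y : C}, J X → (X ≅ Y) → J Y)
    (hsum : ∀ {X Y : C}, J X → J Y → J (X ⊞ Y))
    (hproj : ∀ X : C, J X → Projective X)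
    (hcover : ∀ X : C, JPres J X → ∃ (P : C) (_ : J P) (π : P ⟶ X),
      Epi π ∧ ∀ (Z : C) (g : Z ⟶ P), Epi (g ≫ π) → Epi g) :
    ∀ X : ObjectProperty.FullSubcategory (JPres J), Projective X ↔ J X.obj := by
  intro X
  constructor
  · intro hX
    obtain ⟨P, hP, π, hπ, hess⟩ := hcover X.obj X.2
    let π' : (⟨P, jPres_of_mem J hP⟩ : ObjectProperty.FullSubcategory (JPres J)) ⟶ X :=
      ObjectProperty.homMk π
    have : Epi π' := (ObjectProperty.ι (JPres J)).epi_of_epi_map hπ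
    obtain ⟨s, hs⟩ := hX.factors (𝟙 X) π'
    have := isIso_of_comp_eq_id_of_essential hess (congrArg InducedCategory.Hom.hom hs)
    exact hrepl hP (asIso s.hom).symm
  · intro hX
    have := preservesEpimorphisms_ι_jPres J hsum hproj
    exact (ObjectProperty.ι (JPres J)).projective_of_map_projective (hproj _ hX)

end
end
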